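/- Let φ₀: SU(2) → ℝ⁴ be the tautological embedding (ζ₁,ζ₂) ↦ (ζ₁,ζ₂) and φ₁: SU(2) → ℝ³ the Hopf map (ζ₁,ζ₂) ↦ (ζ₁·conj(ζ₂), ½(|ζ₁|² − |ζ₂|²)). Then φ₀* h_{ℝ⁴} = σ₁² + σ₂² + σ₃² and φ₁* h_{ℝ³} = σ₁² + σ₂². Consequently, for p,q ≥ 0 the map φ_{p,q} = p φ₀ ⊕ q φ₁ : SU(2) → ℝ⁷ satisfies φ_{p,q}* h_{ℝ⁷} = (p²+q²)(σ₁² + σ₂²) + p² σ₃². -/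

import Mathlib

/- STATEMENT 12: for the tautological embedding `φ₀ : SU(2) → ℝ⁴`, `(ζ₁,ζ₂) ↦ (ζ₁,ζ₂)`,
and the Hopf map `φ₁ : SU(2) → ℝ³`, `(ζ₁,ζ₂) ↦ (ζ₁ζ̄₂, ½(|ζ₁|²−|ζ₂|²))`, one has
`φ₀*h_{ℝ⁴} = σ₁² + σ₂² + σ₃²` and `φ₁*h_{ℝ³} = σ₁² + σ₂²`; consequently, for `p,q ≥ 0`,
`(pφ₀ ⊕ qφ₁)*h_{ℝ⁷} = (p²+q²)(σ₁²+σ₂²) + p²σ₃²`.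

Pullback metrics are expressed by their quadratic forms on tangent vectors `w` of the
unit sphere `SU(2) ⊂ ℂ²`; note `dφ₀ = id`. -/

open Complex

/-- `SU(2)`, identified with the unit sphere in `ℂ²`. -/
def SU2 : Set (ℂ × ℂ) := {ζ | Complex.normSq ζ.1 + Complex.normSq ζ.2 = 1}

/-- `w` is tangent to the unit sphere `SU(2)` at `ζ`. -/
def TangentSU2 (ζ w : ℂ × ℂ) : Prop :=
  ((starRingEnd ℂ) ζ.1 * w.1 + (starRingEnd ℂ) ζ.2 * w.2).re = 0

/-- The left-invariant one-form `σ₁` (with `σ₁ + iσ₂ = i(ζ₂dζ₁ − ζ₁dζ₂)`). -/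
noncomputable def sig1 (ζ w : ℂ × ℂ) : ℝ := (Complex.I * (ζ.2 * w.1 - ζ.1 * w.2)).re

/-- The left-invariant one-form `σ₂`. -/
noncomputable def sig2 (ζ w : ℂ × ℂ) : ℝ := (Complex.I * (ζ.2 * w.1 - ζ.1 * w.2)).im

/-- The left-invariant one-form `σ₃ = −i(ζ̄₁dζ₁ + ζ̄₂dζ₂)`. -/
noncomputable def sig3 (ζ w : ℂ × ℂ) : ℝ :=
  (-Complex.I * ((starRingEnd ℂ) ζ.1 * w.1 + (starRingEnd ℂ) ζ.2 * w.2)).re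

/-- The ℂ-valued component of the Hopf map, `ζ₁ζ̄₂`. -/
noncomputable def hopfC (ζ : ℂ × ℂ) : ℂ := ζ.1 * (starRingEnd ℂ) ζ.2

/-- The ℝ-valued component of the Hopf map, `½(|ζ₁|²−|ζ₂|²)`. -/
noncomputable def hopfR (ζ : ℂ × ℂ) : ℝ := (Complex.normSq ζ.1 - Complex.normSq ζ.2) / 2

lemma fderiv_hopfC (ζ w : ℂ × ℂ) :
    fderiv ℝ hopfC ζ w = w.1 * (starRingEnd ℂ) ζ.2 + ζ.1 * (starRingEnd ℂ) w.2 := by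
  have h2 : HasFDerivAt (fun ζ : ℂ × ℂ => (starRingEnd ℂ) ζ.2)
      ((Complex.conjCLE.toContinuousLinearMap).comp (ContinuousLinearMap.snd ℝ ℂ ℂ)) ζ :=
    (Complex.conjCLE.hasFDerivAt).comp ζ hasFDerivAt_snd
  have h := (hasFDerivAt_fst (𝕜 := ℝ) (p := ζ)).mul h2
  rw [show hopfC = fun ζ : ℂ × ℂ => ζ.1 * (starRingEnd ℂ) ζ.2 from rfl,
    (show HasFDerivAt (fun ζ : ℂ × ℂ => ζ.1 * (starRingEnd ℂ) ζ.2) _ ζ from h).fderiv]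
  simp
  ring

lemma fderiv_hopfR (ζ w : ℂ × ℂ) :
    fderiv ℝ hopfR ζ w = ((starRingEnd ℂ) ζ.1 * w.1).re - ((starRingEnd ℂ) ζ.2 * w.2).re := by
  have h1 : HasFDerivAt (fun ζ : ℂ × ℂ => (starRingEnd ℂ) ζ.1)
      ((Complex.conjCLE.toContinuousLinearMap).comp (ContinuousLinearMap.fst ℝ ℂ ℂ)) ζ :=
    (Complex.conjCLE.hasFDerivAt).comp ζ hasFDerivAt_fst
  have h2 : HasFDerivAt (fun ζ : ℂ × ℂ => (starRingEnd ℂ) ζ.2)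
      ((Complex.conjCLE.toContinuousLinearMap).comp (ContinuousLinearMap.snd ℝ ℂ ℂ)) ζ :=
    (Complex.conjCLE.hasFDerivAt).comp ζ hasFDerivAt_snd
  have h3 := (h1.mul (hasFDerivAt_fst (𝕜 := ℝ) (p := ζ))).sub
      (h2.mul (hasFDerivAt_snd (𝕜 := ℝ) (p := ζ)))
  have h4 := ((Complex.reCLM.hasFDerivAt).comp ζ h3).const_mul (1/2 : ℝ)
  have he : hopfR = fun y : ℂ × ℂ => (1/2 : ℝ) *
      (⇑Complex.reCLM ∘ fun x : ℂ × ℂ => (starRingEnd ℂ) x.1 * x.1 - (starRingEnd ℂ) x.2 * x.2) y := by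
    funext z
    simp [hopfR, Complex.normSq_apply, Complex.sub_re, Complex.mul_re]
    ring
  rw [he, (show HasFDerivAt (fun y : ℂ × ℂ => (1/2 : ℝ) *
      (⇑Complex.reCLM ∘ fun x : ℂ × ℂ => (starRingEnd ℂ) x.1 * x.1 - (starRingEnd ℂ) x.2 * x.2) y) _ ζ
      from h4).fderiv]
  simp [Complex.sub_re, Complex.mul_re]
  ring

theorem stmt_12 : ∀ ζ ∈ SU2, ∀ w : ℂ × ℂ, TangentSU2 ζ w →
    -- φ₀* h_{ℝ⁴} = σ₁² + σ₂² + σ₃²  (dφ₀ = id) :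
    (Complex.normSq w.1 + Complex.normSq w.2
      = sig1 ζ w ^ 2 + sig2 ζ w ^ 2 + sig3 ζ w ^ 2) ∧
    -- φ₁* h_{ℝ³} = σ₁² + σ₂² :
    (Complex.normSq (fderiv ℝ hopfC ζ w) + (fderiv ℝ hopfR ζ w) ^ 2
      = sig1 ζ w ^ 2 + sig2 ζ w ^ 2) ∧
    -- (pφ₀ ⊕ qφ₁)* h_{ℝ⁷} = (p²+q²)(σ₁²+σ₂²) + p²σ₃² :
    (∀ p q : ℝ, 0 ≤ p → 0 ≤ q →
      p ^ 2 * (Complex.normSq w.1 + Complex.normSq w.2)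
        + q ^ 2 * (Complex.normSq (fderiv ℝ hopfC ζ w) + (fderiv ℝ hopfR ζ w) ^ 2)
      = (p ^ 2 + q ^ 2) * (sig1 ζ w ^ 2 + sig2 ζ w ^ 2) + p ^ 2 * sig3 ζ w ^ 2) := by
  intro ζ hζ w hw
  rw [fderiv_hopfC, fderiv_hopfR]
  simp only [SU2, Set.mem_setOf_eq, Complex.normSq_apply] at hζ
  simp only [TangentSU2, Complex.add_re, Complex.mul_re, Complex.conj_re, Complex.conj_im] at hw
  simp only [sig1, sig2, sig3, Complex.normSq_apply, Complex.mul_re, Complex.mul_im,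
    Complex.add_re, Complex.add_im, Complex.sub_re, Complex.sub_im, Complex.conj_re,
    Complex.conj_im, Complex.I_re, Complex.I_im, Complex.neg_re, Complex.neg_im]
  set a := ζ.1.re; set b := ζ.1.im; set c := ζ.2.re; set d := ζ.2.im
  set e := w.1.re; set f := w.1.im; set g := w.2.re; set h := w.2.im
  refine ⟨?_, ?_, ?_⟩
  · linear_combination (-(e^2 + f^2 + g^2 + h^2)) * hζ + (a*e + b*f + c*g + d*h) * hw
  · linear_combination (a*e + b*f + c*g + d*h) * hw
  · intro p q _ _
    linear_combination (-(p^2)*(e^2 + f^2 + g^2 + h^2)) * hζ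
      + ((p^2 + q^2)*(a*e + b*f + c*g + d*h)) * hw
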